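/- Let Θ be a threshold function and λ ≥ 0, and suppose there is a constant L_Θ ∈ [0,1] such that the map u ↦ sup{t : Θ(t;λ) ≤ u} − (1−L_Θ)u is nondecreasing on (0,∞). Let P_Θ be the penalty obtained from condition (constrP) with q ≡ 0. Given Y ∈ ℝ^{n×m}, suppose Θ(·;λ) is continuous at every singular value of Y, and let B̂ = Θ^σ(Y;λ) (the minimizer of Q). Then for every matrix Δ ∈ ℝ^{n×m}, Q(B̂+Δ) − Q(B̂) ≥ (C₁/2)‖Δ‖_F², where Q(B) = ‖Y−B‖_F²/2 + Σ_i P_Θ(σ_i(B);λ) and C₁ = 1 − L_Θ. -/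

import Mathlib

open Matrix

/-- Squared Frobenius norm of a real matrix. -/
def frobSq {n m : ℕ} (A : Matrix (Fin n) (Fin m) ℝ) : ℝ := ∑ i, ∑ j, A i j ^ 2

/-- `(U, σ, V)` is a (reduced) singular value decomposition of the real `n × m` matrix `B`. -/
def IsSVD {n m k : ℕ} (B : Matrix (Fin n) (Fin m) ℝ) (U : Matrix (Fin n) (Fin k) ℝ)
    (σ : Fin k → ℝ) (V : Matrix (Fin m) (Fin k) ℝ) : Prop :=
  Uᵀ * U = 1 ∧ Vᵀ * V = 1 ∧ Antitone σ ∧ (∀ i, 0 ≤ σ i) ∧ B = U * diagonal σ * Vᵀ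

/-- A threshold function `Θ(t; λ)`. -/
def IsThresholdFunction (Θ : ℝ → ℝ → ℝ) : Prop :=
  ∀ lam : ℝ, 0 ≤ lam →
    (∀ t : ℝ, Θ (-t) lam = -Θ t lam) ∧
    (Monotone fun t => Θ t lam) ∧
    Filter.Tendsto (fun t => Θ t lam) Filter.atTop Filter.atTop ∧
    (∀ t : ℝ, 0 ≤ t → 0 ≤ Θ t lam ∧ Θ t lam ≤ t)

/-- The penalty obtained from condition (constrP) with `q ≡ 0`:
`P_Θ(θ;λ) = ∫₀^{|θ|} (sup{s : Θ(s;λ) ≤ u} − u) du`. -/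
noncomputable def penaltyOf (Θ : ℝ → ℝ → ℝ) (lam θ : ℝ) : ℝ :=
  ∫ u in (0:ℝ)..|θ|, (sSup {s : ℝ | Θ s lam ≤ u} - u)

/-!
Write `g(u) = sup {s | Θ(s;λ) ≤ u}` (`upperInverse`) and
`P̃(x) = P_Θ(x;λ) + L x²/2 = ∫₀ˣ (g(u) − (1−L)u) du`.
The integrand is nondecreasing, so `P̃` is convex on `[0, ∞)`, and for `σ ≥ 0` the number
`r(σ) = σ − (1−L)Θ(σ;λ)` lies between the integrand's values left and right of `Θ(σ;λ)`:
it is a subgradient of `P̃` there, and `σ ↦ r(σ)` is nondecreasing.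

With `θ_i = Θ(σ_i(Y);λ)`, `A = U diag(r(σ_i(Y))) Vᵀ` and `B = B̂ + Δ`, expanding the squares gives
`Q(B) − Q(B̂) − (1−L)/2 ‖Δ‖² = ∑ (P̃(σ_i(B)) − P̃(θ_i)) − ⟨A, B − B̂⟩`.
Von Neumann's trace inequality `⟨A, B⟩ ≤ ∑ r(σ_i(Y)) σ_i(B)` (the squared overlaps of the singular
vectors form a doubly substochastic matrix) and `⟨A, B̂⟩ = ∑ r(σ_i(Y)) θ_i` reduce this to the
scalar subgradient inequalities.
-/

open Filter Topology MeasureTheory Finset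

lemma mul_sub_le_intervalIntegral {h : ℝ → ℝ} {a b c : ℝ} (hint : IntervalIntegrable h volume a b)
    (hle : ∀ u ∈ Set.Ioo b a, h u ≤ c) (hge : ∀ u ∈ Set.Ioo a b, c ≤ h u) :
    c * (b - a) ≤ ∫ u in a..b, h u := by
  rcases le_total a b with hab | hba
  · have := intervalIntegral.integral_mono_on_of_le_Ioo hab intervalIntegrable_const hint hge
    simpa [mul_comm] using this
  · rw [intervalIntegral.integral_symm]
    have := intervalIntegral.integral_mono_on_of_le_Ioo hba hint.symm intervalIntegrable_const hle
    simp only [intervalIntegral.integral_const, smul_eq_mul] at this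
    linarith

noncomputable def upperInverse (f : ℝ → ℝ) (u : ℝ) : ℝ := sSup {s | f s ≤ u}

section UpperInverse

open Set

variable {f : ℝ → ℝ}

lemma bddAbove_setOf_le (htop : Tendsto f atTop atTop) (u : ℝ) : BddAbove {s | f s ≤ u} := by
  obtain ⟨T, hT⟩ := eventually_atTop.mp (htop.eventually_gt_atTop u)
  exact ⟨T, fun s hs => le_of_not_gt fun hTs => (hT s hTs.le).not_ge hs⟩

lemma le_upperInverse (htop : Tendsto f atTop atTop) {s u : ℝ} (h : f s ≤ u) :
    s ≤ upperInverse f u :=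
  le_csSup (bddAbove_setOf_le htop u) h

lemma upperInverse_le (hf : Monotone f) {s u : ℝ} (h0 : f 0 ≤ u) (h : u < f s) :
    upperInverse f u ≤ s :=
  csSup_le ⟨0, h0⟩ fun _ ht => le_of_not_gt fun hst => (lt_of_le_of_lt ht h).not_ge (hf hst.le)

lemma monotoneOn_upperInverse (htop : Tendsto f atTop atTop) :
    MonotoneOn (upperInverse f) (Ici (f 0)) :=
  fun _ hu v _ huv => csSup_le_csSup (bddAbove_setOf_le htop v) ⟨0, hu⟩ fun _ hs => hs.trans huv

lemma intervalIntegrable_upperInverse (htop : Tendsto f atTop atTop) {a b : ℝ}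
    (ha : f 0 ≤ a) (hb : f 0 ≤ b) : IntervalIntegrable (upperInverse f) volume a b :=
  ((monotoneOn_upperInverse htop).mono fun _ hx => (le_min ha hb).trans hx.1).intervalIntegrable

variable {k : ℝ} (hmono : MonotoneOn (fun u => upperInverse f u - k * u) (Ioi 0))
include hmono

lemma sub_mul_le_upperInverse_sub_mul (htop : Tendsto f atTop atTop) {s u : ℝ} (hs : 0 ≤ f s)
    (hu : f s < u) : s - k * f s ≤ upperInverse f u - k * u := by
  have hlim : Tendsto (fun t => s - k * t) (𝓝[>] (f s)) (𝓝 (s - k * f s)) :=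
    (Continuous.tendsto (by fun_prop) _).mono_left nhdsWithin_le_nhds
  refine le_of_tendsto hlim ?_
  filter_upwards [Ioo_mem_nhdsGT hu] with t ht
  calc s - k * t ≤ upperInverse f t - k * t := by gcongr; exact le_upperInverse htop ht.1.le
    _ ≤ upperInverse f u - k * u := hmono (hs.trans_lt ht.1) (hs.trans_lt hu) ht.2.le

lemma upperInverse_sub_mul_le_sub_mul (hf : Monotone f) {s u : ℝ} (h0 : f 0 ≤ u) (hu : 0 < u)
    (hus : u < f s) : upperInverse f u - k * u ≤ s - k * f s := by
  have hlim : Tendsto (fun t => s - k * t) (𝓝[<] (f s)) (𝓝 (s - k * f s)) :=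
    (Continuous.tendsto (by fun_prop) _).mono_left nhdsWithin_le_nhds
  refine ge_of_tendsto hlim ?_
  filter_upwards [Ioo_mem_nhdsLT hus] with t ht
  calc upperInverse f u - k * u ≤ upperInverse f t - k * t := hmono hu (hu.trans ht.1) ht.1.le
    _ ≤ s - k * t := by gcongr; exact upperInverse_le hf (h0.trans ht.1.le) ht.2

lemma monotoneOn_sub_mul (hf : Monotone f) (htop : Tendsto f atTop atTop) (hf0 : f 0 = 0) :
    MonotoneOn (fun s => s - k * f s) (Ici 0) := by
  intro s hs t _ hst
  have hfs : 0 ≤ f s := hf0 ▸ hf hs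
  rcases (hf hst).eq_or_lt with heq | hlt
  · simp only [heq]; linarith
  · exact (sub_mul_le_upperInverse_sub_mul hmono htop hfs (left_lt_add_div_two.mpr hlt)).trans
      (upperInverse_sub_mul_le_sub_mul hmono hf (by linarith) (by linarith)
        (add_div_two_lt_right.mpr hlt))

lemma mul_sub_le_integral_upperInverse_sub_mul (hf : Monotone f) (htop : Tendsto f atTop atTop)
    (hf0 : f 0 = 0) {s b : ℝ} (hs : 0 ≤ s) (hb : 0 ≤ b) :
    (s - k * f s) * (b - f s) ≤ ∫ u in (f s)..b, (upperInverse f u - k * u) := by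
  have hfs : 0 ≤ f s := hf0 ▸ hf hs
  have hint : IntervalIntegrable (fun u => upperInverse f u - k * u) volume (f s) b :=
    (intervalIntegrable_upperInverse htop (by rwa [hf0]) (by rwa [hf0])).sub
      ((continuous_const_mul k).intervalIntegrable _ _)
  exact mul_sub_le_intervalIntegral hint
    (fun u hu => upperInverse_sub_mul_le_sub_mul hmono hf (by linarith [hu.1])
      (by linarith [hu.1]) hu.2)
    (fun u hu => sub_mul_le_upperInverse_sub_mul hmono htop hfs hu.1)

end UpperInverse

section Penalty

variable {Θ : ℝ → ℝ → ℝ} (hΘ : IsThresholdFunction Θ) {lam : ℝ} (hlam : 0 ≤ lam)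
include hΘ hlam

lemma IsThresholdFunction.apply_zero : Θ 0 lam = 0 :=
  le_antisymm ((hΘ lam hlam).2.2.2 0 le_rfl).2 ((hΘ lam hlam).2.2.2 0 le_rfl).1

lemma penaltyOf_add_eq_integral (L : ℝ) {x : ℝ} (hx : 0 ≤ x) :
    penaltyOf Θ lam x + L * x ^ 2 / 2
      = ∫ u in (0 : ℝ)..x, (upperInverse (Θ · lam) u - (1 - L) * u) := by
  have hf0 := hΘ.apply_zero hlam
  have hint : IntervalIntegrable (fun u => upperInverse (Θ · lam) u - u) volume 0 x :=
    (intervalIntegrable_upperInverse (hΘ lam hlam).2.2.1 hf0.le (hf0.trans_le hx)).sub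
      (continuous_id.intervalIntegrable _ _)
  have hsplit : (fun u => upperInverse (Θ · lam) u - (1 - L) * u)
      = fun u => (upperInverse (Θ · lam) u - u) + L * u := by
    ext u; ring
  rw [hsplit, intervalIntegral.integral_add hint
    ((continuous_const_mul L).intervalIntegrable _ _), intervalIntegral.integral_const_mul,
    integral_id, penaltyOf, abs_of_nonneg hx]
  simp only [upperInverse]
  ring

lemma mul_sub_le_penaltyOf_sub {L : ℝ}
    (hmono : MonotoneOn (fun u => upperInverse (Θ · lam) u - (1 - L) * u) (Set.Ioi 0))
    {s b : ℝ} (hs : 0 ≤ s) (hb : 0 ≤ b) :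
    (s - (1 - L) * Θ s lam) * (b - Θ s lam)
      ≤ (penaltyOf Θ lam b + L * b ^ 2 / 2)
        - (penaltyOf Θ lam (Θ s lam) + L * Θ s lam ^ 2 / 2) := by
  obtain ⟨-, hf, htop, hbound⟩ := hΘ lam hlam
  have hf0 := hΘ.apply_zero hlam
  have hint {x : ℝ} (hx : 0 ≤ x) :
      IntervalIntegrable (fun u => upperInverse (Θ · lam) u - (1 - L) * u) volume 0 x :=
    (intervalIntegrable_upperInverse htop hf0.le (hf0.trans_le hx)).sub
      ((continuous_const_mul _).intervalIntegrable _ _)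
  rw [penaltyOf_add_eq_integral hΘ hlam L hb,
    penaltyOf_add_eq_integral hΘ hlam L (hbound s hs).1,
    intervalIntegral.integral_interval_sub_left (hint hb) (hint (hbound s hs).1)]
  exact mul_sub_le_integral_upperInverse_sub_mul hmono hf htop hf0 hs hb

end Penalty

section Rearrangement

variable {ι : Type*} [Fintype ι]

lemma sum_mul_le_sum_of_threshold [DecidableEq ι] (S : Finset ι) {b v : ι → ℝ} {c : ℝ}
    (hc : 0 ≤ c) (hbS : ∀ j ∈ S, c ≤ b j) (hbSc : ∀ j ∉ S, b j ≤ c)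
    (hv0 : ∀ j, 0 ≤ v j) (hv1 : ∀ j, v j ≤ 1) (hv : ∑ j, v j ≤ #S) :
    ∑ j, b j * v j ≤ ∑ j ∈ S, b j := by
  have hSc : ∑ j ∈ Sᶜ, v j ≤ ∑ j ∈ S, (1 - v j) := by
    rw [sum_sub_distrib, sum_const, nsmul_one]
    linarith [sum_add_sum_compl S v]
  calc ∑ j, b j * v j = ∑ j ∈ S, b j * v j + ∑ j ∈ Sᶜ, b j * v j := (sum_add_sum_compl S _).symm
    _ ≤ ∑ j ∈ S, b j * v j + ∑ j ∈ Sᶜ, c * v j := by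
      gcongr with j hj
      · exact hv0 j
      · exact hbSc j (mem_compl.mp hj)
    _ ≤ ∑ j ∈ S, b j * v j + ∑ j ∈ S, c * (1 - v j) := by
      rw [← mul_sum, ← mul_sum]
      gcongr
    _ ≤ ∑ j ∈ S, b j * v j + ∑ j ∈ S, b j * (1 - v j) := by
      gcongr with j hj
      · linarith [hv1 j]
      · exact hbS j hj
    _ = ∑ j ∈ S, b j := by rw [← sum_add_distrib]; exact sum_congr rfl fun j _ => by ring

variable [LinearOrder ι] [LocallyFiniteOrderBot ι] [PredOrder ι] {r D : ι → ℝ}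

lemma mul_sum_Iic_le_sum_Iic_mul (hr : Antitone r) (hD : ∀ k, 0 ≤ ∑ p ∈ Iic k, D p) (a : ι) :
    r a * ∑ p ∈ Iic a, D p ≤ ∑ p ∈ Iic a, r p * D p := by
  induction a using WellFoundedLT.induction with
  | _ a ih =>
    rw [← Iio_insert, sum_insert notMem_Iio_self, sum_insert notMem_Iio_self, mul_add]
    by_cases ha : IsMin a
    · simp [ha.finsetIio_eq]
    · rw [← Iic_pred_eq_Iio_of_not_isMin ha]
      have hpred := Order.pred_lt_of_not_isMin ha
      nlinarith [ih _ hpred, hr hpred.le, hD (Order.pred a)]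

lemma sum_mul_nonneg_of_antitone (hr : Antitone r) (hr0 : ∀ p, 0 ≤ r p)
    (hD : ∀ k, 0 ≤ ∑ p ∈ Iic k, D p) : 0 ≤ ∑ p, r p * D p := by
  rcases isEmpty_or_nonempty ι with hι | hι
  · simp
  obtain ⟨a, ha⟩ : ∃ a : ι, Iic a = univ :=
    ⟨univ.max' univ_nonempty, eq_univ_of_forall fun p => mem_Iic.mpr (le_max' _ p (mem_univ p))⟩
  have := mul_sum_Iic_le_sum_Iic_mul hr hD a
  rw [ha] at this
  exact (mul_nonneg (hr0 a) (ha ▸ hD a)).trans this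

lemma sum_sum_mul_le_of_substochastic {b : ι → ℝ} {W : ι → ι → ℝ}
    (hr : Antitone r) (hr0 : ∀ p, 0 ≤ r p) (hb : Antitone b) (hb0 : ∀ p, 0 ≤ b p)
    (hW0 : ∀ p q, 0 ≤ W p q) (hrow : ∀ p, ∑ q, W p q ≤ 1) (hcol : ∀ q, ∑ p, W p q ≤ 1) :
    ∑ p, ∑ q, r p * b q * W p q ≤ ∑ p, r p * b p := by
  classical
  have key := sum_mul_nonneg_of_antitone (D := fun p => b p - ∑ q, b q * W p q) hr hr0 fun k => by
    have hprefix : ∑ q, b q * ∑ p ∈ Iic k, W p q ≤ ∑ q ∈ Iic k, b q := by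
      refine sum_mul_le_sum_of_threshold _ (hb0 k) (fun q hq => hb (mem_Iic.mp hq))
        (fun q hq => hb (not_le.mp (mt mem_Iic.mpr hq)).le)
        (fun q => sum_nonneg fun p _ => hW0 p q)
        (fun q => (sum_le_sum_of_subset_of_nonneg (subset_univ _) fun p _ _ => hW0 p q).trans
          (hcol q)) ?_
      rw [sum_comm]
      exact (sum_le_sum fun p _ => hrow p).trans (by simp)
    simp only [mul_sum] at hprefix
    rw [sum_comm] at hprefix
    simp only [sum_sub_distrib]
    linarith
  simp only [mul_sub, mul_sum, sum_sub_distrib, sub_nonneg] at key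
  simpa only [mul_assoc] using key

end Rearrangement

lemma svd_sub_smul_svd {ι κ ν : Type*} [Fintype κ] [DecidableEq κ] (U : Matrix ι κ ℝ)
    (V : Matrix ν κ ℝ) (a b : κ → ℝ) (c : ℝ) :
    U * diagonal a * Vᵀ - c • (U * diagonal b * Vᵀ)
      = U * diagonal (fun i => a i - c * b i) * Vᵀ := by
  rw [← Matrix.smul_mul, ← Matrix.mul_smul, ← diagonal_smul, ← Matrix.sub_mul, ← Matrix.mul_sub,
    ← diagonal_sub]
  rfl

section Frobenius

variable {ι κ ν : Type*} [Fintype ι] [Fintype κ] [Fintype ν]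

lemma frobSq_eq_trace {n m : ℕ} (A : Matrix (Fin n) (Fin m) ℝ) : frobSq A = (Aᵀ * A).trace := by
  simp only [frobSq, trace, Matrix.diag, mul_apply, transpose_apply, sq]
  exact sum_comm

lemma trace_transpose_mul_comm (X Z : Matrix ι κ ℝ) : (Xᵀ * Z).trace = (Zᵀ * X).trace := by
  rw [← trace_transpose, transpose_mul, transpose_transpose]

lemma frobSq_sub {n m : ℕ} (X Z : Matrix (Fin n) (Fin m) ℝ) :
    frobSq (X - Z) = frobSq X - 2 * (Xᵀ * Z).trace + frobSq Z := by
  simp only [frobSq_eq_trace, transpose_sub, Matrix.sub_mul, Matrix.mul_sub, trace_sub]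
  rw [trace_transpose_mul_comm Z X]
  ring

variable [DecidableEq κ]

lemma trace_svd_transpose_mul_svd (U U' : Matrix ι κ ℝ) (V V' : Matrix ν κ ℝ) (r b : κ → ℝ) :
    ((U * diagonal r * Vᵀ)ᵀ * (U' * diagonal b * V'ᵀ)).trace
      = ∑ p, ∑ q, r p * b q * ((Uᵀ * U') p q * (Vᵀ * V') p q) := by
  have hcycle : (U * diagonal r * Vᵀ)ᵀ * (U' * diagonal b * V'ᵀ)
      = V * (diagonal r * (Uᵀ * U') * diagonal b * V'ᵀ) := by
    simp only [transpose_mul, transpose_transpose, diagonal_transpose, Matrix.mul_assoc]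
  rw [hcycle, trace_mul_comm]
  simp [trace, mul_apply, diagonal_apply, ite_mul, mul_ite, mul_sum, sum_mul]
  refine sum_congr rfl fun p _ => sum_comm.trans <| sum_congr rfl
    fun q _ => sum_congr rfl fun x _ => sum_congr rfl fun i _ => by ring

lemma trace_svd_transpose_mul_svd_of_orthonormal {U : Matrix ι κ ℝ} {V : Matrix ν κ ℝ}
    (hU : Uᵀ * U = 1) (hV : Vᵀ * V = 1) (r b : κ → ℝ) :
    ((U * diagonal r * Vᵀ)ᵀ * (U * diagonal b * Vᵀ)).trace = ∑ p, r p * b p := by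
  rw [trace_svd_transpose_mul_svd, hU, hV]
  refine sum_congr rfl fun p _ => ?_
  rw [sum_eq_single p (fun q _ hq => by simp [one_apply_ne' hq]) (by simp)]
  simp

lemma frobSq_svd_of_orthonormal {n m k : ℕ} {U : Matrix (Fin n) (Fin k) ℝ}
    {V : Matrix (Fin m) (Fin k) ℝ} (hU : Uᵀ * U = 1) (hV : Vᵀ * V = 1) (c : Fin k → ℝ) :
    frobSq (U * diagonal c * Vᵀ) = ∑ p, c p ^ 2 := by
  simp only [frobSq_eq_trace, trace_svd_transpose_mul_svd_of_orthonormal hU hV, sq]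

/-- Bessel's inequality. -/
lemma sum_sq_row_transpose_mul_le_one {U U' : Matrix ι κ ℝ} (hU : Uᵀ * U = 1)
    (hU' : U'ᵀ * U' = 1) (p : κ) : ∑ q, (Uᵀ * U') p q ^ 2 ≤ 1 := by
  have hC : (U - U' * (Uᵀ * U')ᵀ)ᵀ * (U - U' * (Uᵀ * U')ᵀ) = 1 - Uᵀ * U' * (Uᵀ * U')ᵀ := by
    simp only [transpose_sub, transpose_mul, transpose_transpose, Matrix.sub_mul, Matrix.mul_sub,
      Matrix.mul_assoc]
    rw [← Matrix.mul_assoc U'ᵀ U', hU', Matrix.one_mul, hU]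
    abel
  have hdiag := (posSemidef_conjTranspose_mul_self (U - U' * (Uᵀ * U')ᵀ)).diag_nonneg (i := p)
  rw [conjTranspose_eq_transpose_of_trivial, hC, Matrix.sub_apply, one_apply_eq, mul_apply] at hdiag
  simpa [sq] using hdiag

lemma sum_sq_col_transpose_mul_le_one {U U' : Matrix ι κ ℝ} (hU : Uᵀ * U = 1)
    (hU' : U'ᵀ * U' = 1) (q : κ) : ∑ p, (Uᵀ * U') p q ^ 2 ≤ 1 := by
  simpa only [← transpose_apply (Uᵀ * U'), transpose_mul, transpose_transpose]
    using sum_sq_row_transpose_mul_le_one hU' hU q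

variable [LinearOrder κ] [LocallyFiniteOrderBot κ] [PredOrder κ]

/-- von Neumann's trace inequality. -/
lemma trace_svd_transpose_mul_svd_le {U U' : Matrix ι κ ℝ} {V V' : Matrix ν κ ℝ}
    (hU : Uᵀ * U = 1) (hU' : U'ᵀ * U' = 1) (hV : Vᵀ * V = 1) (hV' : V'ᵀ * V' = 1)
    {r b : κ → ℝ} (hr : Antitone r) (hr0 : ∀ p, 0 ≤ r p) (hb : Antitone b) (hb0 : ∀ p, 0 ≤ b p) :
    ((U * diagonal r * Vᵀ)ᵀ * (U' * diagonal b * V'ᵀ)).trace ≤ ∑ p, r p * b p := by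
  rw [trace_svd_transpose_mul_svd]
  calc ∑ p, ∑ q, r p * b q * ((Uᵀ * U') p q * (Vᵀ * V') p q)
      ≤ ∑ p, ∑ q, r p * b q * (((Uᵀ * U') p q ^ 2 + (Vᵀ * V') p q ^ 2) / 2) := by
        gcongr with p _ q _
        · exact mul_nonneg (hr0 p) (hb0 q)
        · nlinarith [sq_nonneg ((Uᵀ * U') p q - (Vᵀ * V') p q)]
    _ ≤ ∑ p, r p * b p := by
      refine sum_sum_mul_le_of_substochastic hr hr0 hb hb0 (fun p q => by positivity)
        (fun p => ?_) (fun q => ?_)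
      · rw [← sum_div, sum_add_distrib]
        linarith [sum_sq_row_transpose_mul_le_one hU hU' p,
          sum_sq_row_transpose_mul_le_one hV hV' p]
      · rw [← sum_div, sum_add_distrib]
        linarith [sum_sq_col_transpose_mul_le_one hU hU' q,
          sum_sq_col_transpose_mul_le_one hV hV' q]

end Frobenius

theorem perturbation_lower_bound_general {n m : ℕ}
    (Θ : ℝ → ℝ → ℝ) (hΘ : IsThresholdFunction Θ) (lam : ℝ) (hlam : 0 ≤ lam)
    (L : ℝ) (hL0 : 0 ≤ L)
    (hLmono : ∀ u v : ℝ, 0 < u → u ≤ v →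
      sSup {s : ℝ | Θ s lam ≤ u} - (1 - L) * u ≤ sSup {s : ℝ | Θ s lam ≤ v} - (1 - L) * v)
    (Y : Matrix (Fin n) (Fin m) ℝ)
    (U : Matrix (Fin n) (Fin (min n m)) ℝ) (σ : Fin (min n m) → ℝ)
    (V : Matrix (Fin m) (Fin (min n m)) ℝ)
    (hY : IsSVD Y U σ V) :
    ∀ (Δ : Matrix (Fin n) (Fin m) ℝ)
      (UD : Matrix (Fin n) (Fin (min n m)) ℝ) (σD : Fin (min n m) → ℝ)
      (VD : Matrix (Fin m) (Fin (min n m)) ℝ),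
      IsSVD (U * diagonal (fun i => Θ (σ i) lam) * Vᵀ + Δ) UD σD VD →
      (frobSq (Y - (U * diagonal (fun i => Θ (σ i) lam) * Vᵀ + Δ)) / 2
          + ∑ i, penaltyOf Θ lam (σD i))
        - (frobSq (Y - U * diagonal (fun i => Θ (σ i) lam) * Vᵀ) / 2
          + ∑ i, penaltyOf Θ lam (Θ (σ i) lam))
        ≥ (1 - L) / 2 * frobSq Δ := by
  intro Δ UD σD VD hB
  obtain ⟨hU, hV, hσ, hσ0, rfl⟩ := hY
  obtain ⟨hUD, hVD, hσD, hσD0, hB⟩ := hB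
  have hmono : MonotoneOn (fun u => upperInverse (Θ · lam) u - (1 - L) * u) (Set.Ioi 0) :=
    fun u hu v _ huv => hLmono u v hu huv
  obtain ⟨-, hf, htop, hbound⟩ := hΘ lam hlam
  set θ := fun i => Θ (σ i) lam
  set r := fun i => σ i - (1 - L) * θ i
  have hr : Antitone r := fun i j hij =>
    monotoneOn_sub_mul hmono hf htop (hΘ.apply_zero hlam) (hσ0 j) (hσ0 i) (hσ hij)
  have hr0 : ∀ i, 0 ≤ r i := fun i => by
    nlinarith [hbound (σ i) (hσ0 i), mul_nonneg hL0 (hbound (σ i) (hσ0 i)).1]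
  have hvN := trace_svd_transpose_mul_svd_le hU hUD hV hVD hr hr0 hσD hσD0
  rw [← svd_sub_smul_svd, transpose_sub, transpose_smul, Matrix.sub_mul, Matrix.smul_mul,
    trace_sub, trace_smul, smul_eq_mul] at hvN
  have hsub : ∑ i, (r i * σD i - σ i * θ i + (1 - L) * θ i ^ 2)
      ≤ ∑ i, (penaltyOf Θ lam (σD i) - penaltyOf Θ lam (θ i) + L / 2 * σD i ^ 2
        - L / 2 * θ i ^ 2) :=
    sum_le_sum fun i _ => by
      linear_combination mul_sub_le_penaltyOf_sub hΘ hlam hmono (hσ0 i) (hσD0 i)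
  simp only [sum_sub_distrib, sum_add_distrib, ← mul_sum] at hsub
  have hΔ : Δ = UD * diagonal σD * VDᵀ - U * diagonal θ * Vᵀ := by rw [← hB]; abel
  rw [hB, hΔ, frobSq_sub, frobSq_sub, frobSq_sub, trace_transpose_mul_comm (UD * _ * _),
    frobSq_svd_of_orthonormal hU hV, frobSq_svd_of_orthonormal hU hV,
    frobSq_svd_of_orthonormal hUD hVD, trace_svd_transpose_mul_svd_of_orthonormal hU hV]
  linear_combination hvN + hsub

/-- Perturbation bound: with `L_Θ ∈ [0,1]` such that `u ↦ sup{t : Θ(t;λ) ≤ u} − (1−L_Θ)u`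
is nondecreasing on `(0,∞)`, `B̂ = Θ^σ(Y;λ)` the minimizer of
`Q(B) = ‖Y−B‖_F²/2 + ∑_i P_Θ(σ_i(B);λ)`, we have
`Q(B̂+Δ) − Q(B̂) ≥ (C₁/2)‖Δ‖_F²` with `C₁ = 1 − L_Θ`, for every `Δ`. -/
theorem perturbation_lower_bound {n m : ℕ}
    (Θ : ℝ → ℝ → ℝ) (hΘ : IsThresholdFunction Θ) (lam : ℝ) (hlam : 0 ≤ lam)
    (L : ℝ) (hL0 : 0 ≤ L) (hL1 : L ≤ 1)
    (hLmono : ∀ u v : ℝ, 0 < u → u ≤ v →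
      sSup {s : ℝ | Θ s lam ≤ u} - (1 - L) * u ≤ sSup {s : ℝ | Θ s lam ≤ v} - (1 - L) * v)
    (Y : Matrix (Fin n) (Fin m) ℝ)
    (U : Matrix (Fin n) (Fin (min n m)) ℝ) (σ : Fin (min n m) → ℝ)
    (V : Matrix (Fin m) (Fin (min n m)) ℝ)
    (hY : IsSVD Y U σ V)
    (hcont : ∀ i, ContinuousAt (fun s => Θ s lam) (σ i)) :
    ∀ (Δ : Matrix (Fin n) (Fin m) ℝ)
      (UD : Matrix (Fin n) (Fin (min n m)) ℝ) (σD : Fin (min n m) → ℝ)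
      (VD : Matrix (Fin m) (Fin (min n m)) ℝ),
      IsSVD (U * diagonal (fun i => Θ (σ i) lam) * Vᵀ + Δ) UD σD VD →
      (frobSq (Y - (U * diagonal (fun i => Θ (σ i) lam) * Vᵀ + Δ)) / 2
          + ∑ i, penaltyOf Θ lam (σD i))
        - (frobSq (Y - U * diagonal (fun i => Θ (σ i) lam) * Vᵀ) / 2
          + ∑ i, penaltyOf Θ lam (Θ (σ i) lam))
        ≥ (1 - L) / 2 * frobSq Δ :=
  perturbation_lower_bound_general Θ hΘ lam hlam L hL0 hLmono Y U σ V hY
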